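/- Let S be a commutative semigroup, p a prime, and R a commutative unitary ring of characteristic p. For any periodic element b of S whose period 𝒫(b) is a power of p, one has (X^b − X^{e(b)})^{ρ(b)} = 0 in the semigroup ring R[X;S]. -/

import Mathlib

/-!
Write `A = X^b` and `E = X^{e(b)}`. In `⟨b⟩` the idempotent is `e(b) = ρ(b)·b`, the period
`n = 𝒫(b)` divides `ρ(b)`, and `n·b + e(b) = e(b)`; hence `E = A^{ρ(b)}` is idempotent and
`Aⁿ E = E`. In characteristic `p` with `n = p^t` the Frobenius gives
`(A - E)ⁿ = Aⁿ - E = Aⁿ(1 - E)`, so `(A - E)^{ρ(b)} = A^{ρ(b)} (1 - E)^{ρ(b)/n} = E(1 - E) = 0`.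
-/

namespace ZS

variable (S : Type*) [AddCommSemigroup S]

/-- `nsmul' n x = (n+1)·x`, iterated addition in a semigroup. -/
def nsmul' : ℕ → S → S
  | 0, x => x
  | n + 1, x => x + nsmul' n x

/-- The cyclic subsemigroup `⟨x⟩ = {x, 2x, 3x, …}` generated by `x`. -/
def cyc (x : S) : Set S := Set.range fun n => nsmul' S n x

/-- `x` is periodic if `⟨x⟩` is finite. -/
def IsPeriodicElem (x : S) : Prop := (cyc S x).Finite

/-- A semigroup is periodic if every element is periodic. -/
def IsPeriodicSemigroup : Prop := ∀ x : S, IsPeriodicElem S x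

/-- `ρ(x)`: the least `m ≥ 1` such that `m·x` is idempotent (equivalently `m·x = e(x)`). -/
noncomputable def rho (x : S) : ℕ :=
  sInf {n : ℕ | nsmul' S n x + nsmul' S n x = nsmul' S n x} + 1

/-- `e(x)`: the unique idempotent of the finite cyclic semigroup `⟨x⟩`. -/
noncomputable def eIdem (x : S) : S :=
  nsmul' S (sInf {n : ℕ | nsmul' S n x + nsmul' S n x = nsmul' S n x}) x

/-- The period of a (periodic) element `x`: the least `n > 0` with `(m+n)x = mx` for some `m`. -/
noncomputable def period (x : S) : ℕ :=
  sInf {n : ℕ | 0 < n ∧ ∃ m : ℕ, nsmul' S (m + n) x = nsmul' S m x}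

/-- The index of a (periodic) element `x`: the least `k ≥ 1` with `kx = tx` for some `t ≠ k`. -/
noncomputable def indexOf (x : S) : ℕ :=
  sInf {k : ℕ | ∃ t : ℕ, t ≠ k ∧ nsmul' S k x = nsmul' S t x} + 1

/-- `exp(S)`: the lcm of the periods of the elements of `S`, described as the least positive
common multiple of all the periods. -/
noncomputable def expS : ℕ := sInf {n : ℕ | 0 < n ∧ ∀ x : S, period S x ∣ n}

/-- `K` is a splitting field for exponent `n`: it contains exactly `n` `n`-th roots of unity. -/
def SplitField (K : Type*) [Field K] (n : ℕ) : Prop := Set.ncard {ζ : K | ζ ^ n = 1} = n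

/-- Green's preorder `a ≼_𝓗 b`. -/
def gLe (a b : S) : Prop := a = b ∨ ∃ c : S, a = b + c

/-- Green's congruence `a 𝓗 b`. -/
def gEq (a b : S) : Prop := gLe S a b ∧ gLe S b a

/-- `a ≺_𝓗 b`. -/
def gLt (a b : S) : Prop := gLe S a b ∧ ¬ gLe S b a

/-- The Green class `H_a`. -/
def HClass (a : S) : Set S := {x : S | gEq S x a}

/-- The stabilizer `St(H_a)` of the Green class of `a`. -/
def stab (a : S) : Set S := {c : S | ∀ x ∈ HClass S a, c + x ∈ HClass S a}

theorem gLe_trans {a b c : S} (h1 : gLe S a b) (h2 : gLe S b c) : gLe S a c := by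
  rcases h1 with rfl | ⟨u, rfl⟩
  · exact h2
  · rcases h2 with rfl | ⟨v, rfl⟩
    · exact Or.inr ⟨u, rfl⟩
    · exact Or.inr ⟨v + u, by rw [add_assoc]⟩

theorem gLe_add_right {a b : S} (x : S) (h : gLe S a b) : gLe S (a + x) (b + x) := by
  rcases h with rfl | ⟨c, rfl⟩
  · exact Or.inl rfl
  · exact Or.inr ⟨c, by rw [add_right_comm]⟩

theorem gEq_add {w x y z : S} (h1 : gEq S w x) (h2 : gEq S y z) : gEq S (w + y) (x + z) := by
  have k1 : gLe S (w + y) (x + y) := gLe_add_right S y h1.1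
  have k2 : gLe S (x + y) (x + z) := by
    have h := gLe_add_right S x h2.1
    rwa [add_comm z x, add_comm y x] at h
  have k3 : gLe S (x + z) (w + z) := gLe_add_right S z h1.2
  have k4 : gLe S (w + z) (w + y) := by
    have h := gLe_add_right S w h2.2
    rwa [add_comm z w, add_comm y w] at h
  exact ⟨gLe_trans S k1 k2, gLe_trans S k3 k4⟩

/-- Green's congruence as an additive congruence. -/
def greenCon : AddCon S where
  r a b := gEq S a b
  iseqv := ⟨fun _ => ⟨Or.inl rfl, Or.inl rfl⟩, fun h => ⟨h.2, h.1⟩,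
    fun h1 h2 => ⟨gLe_trans S h1.1 h2.1, gLe_trans S h2.2 h1.2⟩⟩
  add' h1 h2 := gEq_add S h1 h2

/-- The quotient semigroup `S/𝓗`. -/
abbrev GQuot := (greenCon S).Quotient

/-- The canonical epimorphism `S → S/𝓗`, `a ↦ ā`. -/
def gq (a : S) : GQuot S := (a : (greenCon S).Quotient)

/-- The sum of a sequence (multiset) of elements of `S`, computed in `WithZero S`
(the empty sequence having sum the adjoined zero). -/
def msum (T : Multiset S) : WithZero S := (T.map fun x => (x : WithZero S)).sum

/-- A sequence over a commutative semigroup is (additively) reducible if some proper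
(possibly empty) subsequence has the same sum; the empty sequence has sum the identity of `S`,
when `S` has one. -/
def IsReducible (T : Multiset S) : Prop :=
  (∃ T' : Multiset S, T' ≤ T ∧ T' ≠ T ∧ T' ≠ 0 ∧ msum S T' = msum S T) ∨
    (T ≠ 0 ∧ ∃ z : S, msum S T = ↑z ∧ ∀ s : S, z + s = s)

/-- The Davenport constant `D(S)` of a commutative semigroup. -/
noncomputable def Dav : ℕ∞ :=
  sInf {n : ℕ∞ | ∀ T : Multiset S, (T.card : ℕ∞) ≥ n → IsReducible S T}

/-- The relative Davenport constant `D_a(S)`: the largest length of an additively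
irreducible sequence with sum `a`. -/
noncomputable def Drel (a : S) : ℕ∞ :=
  sSup {n : ℕ∞ | ∃ T : Multiset S,
    T ≠ 0 ∧ ¬ IsReducible S T ∧ msum S T = ↑a ∧ n = (T.card : ℕ∞)}

/-- The Erdős–Burgess constant `I(S)`: the smallest `ℓ` such that every sequence over `S` of
length (at least) `ℓ` has a nonempty subsequence with idempotent sum. -/
noncomputable def EB : ℕ∞ :=
  sInf {n : ℕ∞ | ∀ T : Multiset S, (T.card : ℕ∞) ≥ n →
    ∃ T' : Multiset S, T' ≤ T ∧ T' ≠ 0 ∧ ∃ x : S, msum S T' = ↑x ∧ x + x = x}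

/-- The Davenport constant of a (semigroup which is a) group: the smallest `ℓ` such that every
sequence of length (at least) `ℓ` has a nonempty subsequence whose sum is the identity element. -/
noncomputable def DavGrpSet : ℕ∞ :=
  sInf {n : ℕ∞ | ∀ T : Multiset S, (T.card : ℕ∞) ≥ n →
    ∃ T' : Multiset S, T' ≤ T ∧ T' ≠ 0 ∧ ∃ z : S, msum S T' = ↑z ∧ ∀ x : S, z + x = x}

/-- The Davenport constant of a finite abelian group. -/
noncomputable def DavG (G : Type*) [AddCommMonoid G] : ℕ∞ :=
  sInf {n : ℕ∞ | ∀ T : Multiset G, (T.card : ℕ∞) ≥ n →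
    ∃ T' : Multiset G, T' ≤ T ∧ T' ≠ 0 ∧ T'.sum = 0}

/-- `ψ(a)`: the largest length of a strictly ascending chain of principal ideals starting at
`(a)`. -/
noncomputable def psi (a : S) : ℕ∞ :=
  sSup {n : ℕ∞ | ∃ ℓ : ℕ, n = (ℓ : ℕ∞) ∧
    ∃ c : ℕ → S, c 0 = a ∧ ∀ i < ℓ, gLt S (c i) (c (i + 1))}

/-- `Ψ(S)`: the largest length of a strictly ascending chain of principal ideals of `S`. -/
noncomputable def PsiS : ℕ∞ := ⨆ a : S, psi S a

/-- A subset of a semigroup which is a subgroup: closed under addition, with an identity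
and inverses. -/
def IsSubgroupSet (T : Set S) : Prop :=
  (∀ x ∈ T, ∀ y ∈ T, x + y ∈ T) ∧
    ∃ z ∈ T, (∀ x ∈ T, z + x = x) ∧ ∀ x ∈ T, ∃ y ∈ T, x + y = z

open Classical in
/-- `ε_a`: `0` if `⟨a⟩` is a group, `1` otherwise. -/
noncomputable def eps (a : S) : ℕ∞ := if IsSubgroupSet S (cyc S a) then 0 else 1

/-- The Schützenberger maps on the Green class `H_a`: maps `x ↦ c + x` for `c ∈ St(H_a)`. -/
def GammaSet (a : S) : Set (↥(HClass S a) → ↥(HClass S a)) :=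
  {f | ∃ c ∈ stab S a, ∀ x : ↥(HClass S a), (↑(f x) : S) = c + ↑x}

/-- The Schützenberger group `Γ(H_a)` (as a type; it is empty when `St(H_a) = ∅`). -/
def Gamma (a : S) : Type _ := ↥(GammaSet S a)

instance (a : S) : Add (Gamma S a) :=
  ⟨fun f g => ⟨f.1 ∘ g.1, by
    obtain ⟨c, hc, hfc⟩ := f.2
    obtain ⟨d, hd, hgd⟩ := g.2
    refine ⟨c + d, fun x hx => by rw [add_assoc]; exact hc _ (hd x hx), fun x => ?_⟩
    show (↑(f.1 (g.1 x)) : S) = c + d + ↑x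
    rw [hfc (g.1 x), hgd x, add_assoc]⟩⟩

instance (a : S) : AddCommSemigroup (Gamma S a) where
  add_assoc f g h := Subtype.ext rfl
  add_comm f g := by
    obtain ⟨c, hc, hfc⟩ := f.2
    obtain ⟨d, hd, hgd⟩ := g.2
    apply Subtype.ext
    funext x
    apply Subtype.ext
    show (↑(f.1 (g.1 x)) : S) = ↑(g.1 (f.1 x))
    rw [hfc (g.1 x), hgd x, hgd (f.1 x), hfc x, add_left_comm]

/-- `St(H_a)` as a subsemigroup of `S`. -/
def stabSub (a : S) : AddSubsemigroup S where
  carrier := stab S a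
  add_mem' := fun {c d} hc hd x hx => by rw [add_assoc]; exact hc _ (hd x hx)

/-- The canonical surjection `π_a : St(H_a) → Γ(H_a)`, `c ↦ γ_c`. -/
def gammaMap (a : S) (c : ↥(stabSub S a)) : Gamma S a :=
  ⟨fun x => ⟨(↑c : S) + ↑x, c.2 ↑x x.2⟩, ⟨↑c, c.2, fun _ => rfl⟩⟩

/-- The semigroup algebra `R[X;S]` of a commutative semigroup, realized inside the monoid
algebra of the monoid obtained from `S` by adjoining an identity element. -/
abbrev SAlg (R : Type*) [CommRing R] (S : Type*) [AddCommSemigroup S] :=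
  AddMonoidAlgebra R (WithZero S)

/-- The monomial `r·X^s` of the semigroup algebra. -/
noncomputable def Xm (R : Type*) [CommRing R] {S : Type*} [AddCommSemigroup S] (s : S) (r : R) :
    SAlg R S := AddMonoidAlgebra.single (↑s) r

/-- The factor `X^s - a·X^{e(s)}` of the semigroup algebra. -/
noncomputable def facX (R : Type*) [CommRing R] {S : Type*} [AddCommSemigroup S]
    (s : S) (a : R) : SAlg R S := Xm R s 1 - Xm R (eIdem S s) a

/-- The invariant `d(S,R)`: the supremum of all `ℓ` such that some sequence `s_1,…,s_ℓ` over
`S` satisfies `(X^{s_1} - a_1 X^{e(s_1)}) ⋯ (X^{s_ℓ} - a_ℓ X^{e(s_ℓ)}) ≠ 0` in `R[X;S]` for all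
nonzero `a_1, …, a_ℓ ∈ R`. -/
noncomputable def dd (R : Type*) [CommRing R] (S : Type*) [AddCommSemigroup S] : ℕ∞ :=
  sSup {n : ℕ∞ | ∃ ℓ : ℕ, n = (ℓ : ℕ∞) ∧ ∃ s : Fin ℓ → S,
    ∀ a : Fin ℓ → R, (∀ i, a i ≠ 0) → ∏ i, facX R (s i) (a i) ≠ 0}

/-- `Λ(S)`: the minimum over all generating sets `A` of `S` of `1 + Σ_{a∈A} (ρ(a)-1)`. -/
noncomputable def Lam (S : Type*) [AddCommSemigroup S] : ℕ :=
  sInf {n : ℕ | ∃ A : Finset S,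
    AddSubsemigroup.closure (↑A : Set S) = ⊤ ∧ n = 1 + ∑ a ∈ A, (rho S a - 1)}

/-- An elementary semigroup: an ideal extension of a nilsemigroup `N` by a group with zero
`G ∪ {∞}`. -/
def IsElementary : Prop :=
  ∃ G N : Set S, G ∪ N = Set.univ ∧ Disjoint G N ∧ IsSubgroupSet S G ∧
    (∀ x ∈ N, ∀ s : S, s + x ∈ N) ∧
    ∃ z ∈ N, (∀ s : S, s + z = z) ∧ ∀ x ∈ N, ∃ n : ℕ, nsmul' S n x = z
section CyclicSubsemigroup

variable {S} (b : S)

lemma coe_nsmul' (k : ℕ) : ((nsmul' S k b : S) : WithZero S) = (k + 1) • (b : WithZero S) := by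
  induction k with
  | zero => simp [nsmul']
  | succ k ih => rw [nsmul', WithZero.coe_add, ih, succ_nsmul' _ (k + 1)]

lemma nsmul'_add (m k : ℕ) : nsmul' S (m + k + 1) b = nsmul' S m b + nsmul' S k b := by
  apply WithZero.coe_injective
  simp only [WithZero.coe_add, coe_nsmul', ← add_nsmul]
  congr 1
  omega

variable {b}

lemma nsmul'_add_of_eq {m₀ d : ℕ} (h : nsmul' S (m₀ + d) b = nsmul' S m₀ b) {m : ℕ}
    (hm : m₀ ≤ m) : nsmul' S (m + d) b = nsmul' S m b := by
  induction m, hm using Nat.le_induction with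
  | base => exact h
  | succ m _ ih => rw [show m + 1 + d = m + d + 1 by omega, nsmul', ih, nsmul']

lemma nsmul'_add_mul_of_eq {m₀ d : ℕ} (h : nsmul' S (m₀ + d) b = nsmul' S m₀ b) {m : ℕ}
    (hm : m₀ ≤ m) (c : ℕ) : nsmul' S (m + c * d) b = nsmul' S m b := by
  induction c with
  | zero => simp
  | succ c ih =>
    rw [add_one_mul, ← add_assoc, nsmul'_add_of_eq h (hm.trans (Nat.le_add_right _ _)), ih]

lemma nsmul'_add_of_eq_of_eq {m₁ d₁ m₂ d₂ : ℕ} (hd₁ : 0 < d₁)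
    (h₁ : nsmul' S (m₁ + d₁) b = nsmul' S m₁ b) (h₂ : nsmul' S (m₂ + d₂) b = nsmul' S m₂ b)
    {m : ℕ} (hm : m₁ ≤ m) : nsmul' S (m + d₂) b = nsmul' S m b := by
  have hm₂ : m₂ ≤ m + m₂ * d₁ := (Nat.le_mul_of_pos_right m₂ hd₁).trans (Nat.le_add_left _ _)
  calc nsmul' S (m + d₂) b = nsmul' S (m + d₂ + m₂ * d₁) b :=
        (nsmul'_add_mul_of_eq h₁ (hm.trans (Nat.le_add_right _ _)) m₂).symm
    _ = nsmul' S (m + m₂ * d₁ + d₂) b := by rw [add_right_comm]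
    _ = nsmul' S (m + m₂ * d₁) b := nsmul'_add_of_eq h₂ hm₂
    _ = nsmul' S m b := nsmul'_add_mul_of_eq h₁ hm m₂

lemma IsPeriodicElem.exists_nsmul'_add_eq (hb : IsPeriodicElem S b) :
    ∃ m d : ℕ, 0 < d ∧ nsmul' S (m + d) b = nsmul' S m b := by
  obtain ⟨i, j, hij, heq⟩ := Set.Finite.exists_lt_map_eq_of_forall_mem
    (f := fun k => nsmul' S k b) (t := cyc S b) (fun k => ⟨k, rfl⟩) hb
  exact ⟨i, j - i, Nat.sub_pos_of_lt hij, by rw [Nat.add_sub_cancel' hij.le]; exact heq.symm⟩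

lemma IsPeriodicElem.exists_nsmul'_add_self (hb : IsPeriodicElem S b) :
    ∃ N : ℕ, nsmul' S N b + nsmul' S N b = nsmul' S N b := by
  obtain ⟨i, d, hd, h⟩ := hb.exists_nsmul'_add_eq
  -- `N + 1 = (i + 1) d` is a multiple of the period `d` and `N ≥ i`
  refine ⟨(i + 1) * d - 1, ?_⟩
  have hN : (i + 1) * d - 1 + 1 = (i + 1) * d :=
    Nat.sub_add_cancel (Nat.one_le_iff_ne_zero.2 (by positivity))
  rw [← nsmul'_add, add_assoc, hN]
  exact nsmul'_add_mul_of_eq h (by nlinarith) _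

lemma IsPeriodicElem.eIdem_add_eIdem (hb : IsPeriodicElem S b) :
    eIdem S b + eIdem S b = eIdem S b :=
  Nat.sInf_mem hb.exists_nsmul'_add_self

lemma eIdem_eq_nsmul'_rho_sub_one : eIdem S b = nsmul' S (rho S b - 1) b := rfl

lemma IsPeriodicElem.nsmul'_rho_sub_one_add_rho (hb : IsPeriodicElem S b) :
    nsmul' S (rho S b - 1 + rho S b) b = nsmul' S (rho S b - 1) b := by
  have h := hb.eIdem_add_eIdem
  rwa [eIdem_eq_nsmul'_rho_sub_one, ← nsmul'_add, add_assoc] at h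

lemma IsPeriodicElem.period_spec (hb : IsPeriodicElem S b) :
    0 < period S b ∧ ∃ m : ℕ, nsmul' S (m + period S b) b = nsmul' S m b := by
  obtain ⟨m, d, hd, h⟩ := hb.exists_nsmul'_add_eq
  exact Nat.sInf_mem (s := {n | 0 < n ∧ ∃ m, nsmul' S (m + n) b = nsmul' S m b}) ⟨d, hd, m, h⟩

lemma IsPeriodicElem.nsmul'_add_period (hb : IsPeriodicElem S b) {m : ℕ} (hm : rho S b - 1 ≤ m) :
    nsmul' S (m + period S b) b = nsmul' S m b := by
  obtain ⟨m₀, h⟩ := hb.period_spec.2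
  exact nsmul'_add_of_eq_of_eq (Nat.succ_pos _) hb.nsmul'_rho_sub_one_add_rho h hm

lemma IsPeriodicElem.period_dvd_rho (hb : IsPeriodicElem S b) : period S b ∣ rho S b := by
  set n := period S b
  set M := rho S b - 1
  have hn := hb.period_spec.1
  by_contra hdvd
  have hr : 0 < rho S b % n := Nat.pos_of_ne_zero (mt Nat.dvd_of_mod_eq_zero hdvd)
  have hrM : nsmul' S (M + rho S b % n) b = nsmul' S M b := by
    calc nsmul' S (M + rho S b % n) b
        = nsmul' S (M + rho S b % n + rho S b / n * n) b :=
          (nsmul'_add_mul_of_eq (hb.nsmul'_add_period le_rfl) (Nat.le_add_right _ _) _).symm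
      _ = nsmul' S (M + rho S b) b := by rw [add_assoc, Nat.mod_add_div']
      _ = nsmul' S M b := hb.nsmul'_rho_sub_one_add_rho
  exact absurd (Nat.sInf_le ⟨hr, M, hrM⟩ : n ≤ rho S b % n) (not_le.2 (Nat.mod_lt _ hn))

lemma IsPeriodicElem.nsmul'_period_sub_one_add_eIdem (hb : IsPeriodicElem S b) :
    nsmul' S (period S b - 1) b + eIdem S b = eIdem S b := by
  rw [eIdem_eq_nsmul'_rho_sub_one, ← nsmul'_add, add_right_comm,
    Nat.sub_add_cancel hb.period_spec.1, add_comm, hb.nsmul'_add_period le_rfl]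

end CyclicSubsemigroup

instance {R G : Type*} [CommRing R] [AddMonoid G] {p : ℕ} [CharP R p] :
    CharP (AddMonoidAlgebra R G) p :=
  charP_of_injective_ringHom (f := AddMonoidAlgebra.singleZeroRingHom)
    AddMonoidAlgebra.single_right_injective p

lemma sub_pow_eq_zero_of_isIdempotentElem {A : Type*} [CommRing A] {p : ℕ} [Fact p.Prime]
    [CharP A p] {a e : A} (he : IsIdempotentElem e) {t q : ℕ} (hq : q ≠ 0)
    (hae : a ^ (p ^ t * q) = e) (hmul : a ^ p ^ t * e = e) : (a - e) ^ (p ^ t * q) = 0 := by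
  have hfrob : (a - e) ^ p ^ t = a ^ p ^ t * (1 - e) := by
    rw [sub_pow_char_pow, he.pow_eq (pow_ne_zero _ (Fact.out : p.Prime).ne_zero), mul_sub,
      mul_one, hmul]
  rw [pow_mul, hfrob, mul_pow, ← pow_mul, hae, he.one_sub.pow_eq hq, mul_sub, mul_one, he.eq,
    sub_self]

section SemigroupAlgebra

variable {S} (R : Type*) [CommRing R]

lemma Xm_one_mul_Xm_one (x y : S) : Xm R x 1 * Xm R y 1 = Xm R (x + y) 1 := by
  rw [Xm, Xm, Xm, AddMonoidAlgebra.single_mul_single, one_mul, WithZero.coe_add]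

lemma Xm_one_pow_succ (b : S) (k : ℕ) : Xm R b 1 ^ (k + 1) = Xm R (nsmul' S k b) 1 := by
  rw [Xm, Xm, AddMonoidAlgebra.single_pow, one_pow, coe_nsmul']

lemma Xm_eIdem_eq_pow_rho (b : S) : Xm R (eIdem S b) 1 = Xm R b 1 ^ rho S b := by
  rw [eIdem_eq_nsmul'_rho_sub_one, ← Xm_one_pow_succ, rho, Nat.add_sub_cancel]

variable {R} {b : S}

lemma IsPeriodicElem.isIdempotentElem_Xm_eIdem (hb : IsPeriodicElem S b) :
    IsIdempotentElem (Xm R (eIdem S b) 1) := by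
  rw [IsIdempotentElem, Xm_one_mul_Xm_one, hb.eIdem_add_eIdem]

lemma IsPeriodicElem.Xm_pow_period_mul_Xm_eIdem (hb : IsPeriodicElem S b) :
    Xm R b 1 ^ period S b * Xm R (eIdem S b) 1 = Xm R (eIdem S b) 1 := by
  rw [← Nat.sub_add_cancel hb.period_spec.1, Xm_one_pow_succ, Xm_one_mul_Xm_one,
    hb.nsmul'_period_sub_one_add_eIdem]

end SemigroupAlgebra

/-- `(X^b - X^{e(b)})^{ρ(b)} = 0` in characteristic `p` when the period of `b`
is a power of `p`. -/
theorem stmt19 (S : Type*) [AddCommSemigroup S] (p : ℕ) (hp : p.Prime)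
    (R : Type*) [CommRing R] [CharP R p]
    (b : S) (hb : IsPeriodicElem S b) (ht : ∃ t : ℕ, period S b = p ^ t) :
    (facX R b (1 : R)) ^ (rho S b) = 0 := by
  have := Fact.mk hp
  obtain ⟨t, hper⟩ := ht
  obtain ⟨q, hq⟩ := hb.period_dvd_rho
  have hmul := hb.Xm_pow_period_mul_Xm_eIdem (R := R)
  rw [hper] at hq hmul
  rw [facX, hq]
  refine sub_pow_eq_zero_of_isIdempotentElem hb.isIdempotentElem_Xm_eIdem ?_ ?_ hmul
  · rintro rfl
    simp [rho] at hq
  · rw [← hq, Xm_eIdem_eq_pow_rho]
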